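/- Let j be a positive integer not divisible by 10 and let c be a positive integer, and set a = j·10^c. Then the congruence speed of a is not eventually constant: there is no value V and no threshold B such that for all b ≥ B the congruence speed V(a,b) equals V. Equivalently, for every B there exist b₂ > b₁ ≥ B with V(a,b₁) ≠ V(a,b₂). -/

import Mathlib

/-!
For `a` divisible by `10` and `N < n`, the difference `a ^ n - a ^ N = a ^ N (a ^ (n - N) - 1)`
has a second factor coprime to `10`, so `a ^ n` and `a ^ N` share exactly `N t` final digits, where
`t = min (v₂ a) (v₅ a) ≥ 1`. Hence `V(a, b) = t (ᵇ⁻¹a - ᵇ⁻²a)` for `b ≥ 2`, and this is strictly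
increasing in `b` because `ᵇa = a ^ ᵇ⁻¹a ≥ 2 · ᵇ⁻¹a`.
-/

/-- Integer tetration: `tet a 0 = 1`, `tet a (b+1) = a ^ tet a b`. -/
def tet (a : ℕ) : ℕ → ℕ
  | 0 => 1
  | b + 1 => a ^ tet a b

/-- The number of rightmost decimal digits shared by `x` and `y`, i.e. the
largest `k` such that `x ≡ y (mod 10^k)`. -/
noncomputable def sharedDigits (x y : ℕ) : ℕ := sSup {k : ℕ | x ≡ y [MOD 10 ^ k]}

/-- The congruence speed of `a` at height `b ≥ 1`. -/
noncomputable def congSpeed (a b : ℕ) : ℤ :=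
  (sharedDigits (tet a (b + 1)) (tet a b) : ℤ) - (sharedDigits (tet a b) (tet a (b - 1)) : ℤ)

theorem Nat.ten_pow_dvd_iff {m k : ℕ} (hm : m ≠ 0) :
    10 ^ k ∣ m ↔ k ≤ min (m.factorization 2) (m.factorization 5) := by
  rw [le_min_iff, ← Nat.prime_two.pow_dvd_iff_le_factorization hm,
    ← Nat.prime_five.pow_dvd_iff_le_factorization hm, show (10 : ℕ) = 2 * 5 from rfl, mul_pow]
  refine ⟨fun h => ⟨dvd_trans (dvd_mul_right _ _) h, dvd_trans (dvd_mul_left _ _) h⟩,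
    fun ⟨h2, h5⟩ => Nat.Coprime.mul_dvd_of_dvd_of_dvd ?_ h2 h5⟩
  exact Nat.Coprime.pow k k (by norm_num)

theorem Nat.coprime_ten_pow_sub_one {a m : ℕ} (ha : 10 ∣ a) (ha0 : 0 < a) (hm : m ≠ 0) :
    Nat.Coprime 10 (a ^ m - 1) := by
  have hpos : 1 ≤ a ^ m := Nat.one_le_pow _ _ ha0
  have hdvd : 10 ∣ a ^ m - 1 + 1 := by rw [Nat.sub_add_cancel hpos]; exact dvd_pow ha hm
  exact Nat.Coprime.coprime_dvd_left hdvd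
    (Nat.coprime_self_add_left.2 (Nat.coprime_one_left _))

theorem sharedDigits_eq_of_modEq_iff {x y K : ℕ} (h : ∀ k, x ≡ y [MOD 10 ^ k] ↔ k ≤ K) :
    sharedDigits x y = K := by
  rw [sharedDigits, show {k | x ≡ y [MOD 10 ^ k]} = Set.Iic K from Set.ext h, csSup_Iic]

theorem sharedDigits_pow_pow {a N n : ℕ} (ha : 10 ∣ a) (ha0 : 0 < a) (h : N < n) :
    sharedDigits (a ^ n) (a ^ N) = N * min (a.factorization 2) (a.factorization 5) := by
  apply sharedDigits_eq_of_modEq_iff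
  intro k
  have hle : a ^ N ≤ a ^ n := Nat.pow_le_pow_right ha0 h.le
  have hdiff : a ^ n - a ^ N = a ^ N * (a ^ (n - N) - 1) := by
    rw [Nat.mul_sub, mul_one, ← pow_add, Nat.add_sub_cancel' h.le]
  rw [Nat.ModEq.comm, Nat.modEq_iff_dvd' hle, hdiff,
    ((Nat.coprime_ten_pow_sub_one ha ha0 (by omega)).pow_left k).dvd_mul_right,
    Nat.ten_pow_dvd_iff (pow_pos ha0 N).ne', Nat.factorization_pow, Finsupp.smul_apply,
    Finsupp.smul_apply, smul_eq_mul, smul_eq_mul, ← Nat.mul_min_mul_left]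

theorem Nat.two_mul_le_two_pow : ∀ n : ℕ, 2 * n ≤ 2 ^ n
  | 0 => Nat.zero_le _
  | _ + 1 => by rw [pow_succ']; exact Nat.mul_le_mul_left 2 Nat.lt_two_pow_self

theorem tet_pos {a : ℕ} (ha : 0 < a) : ∀ b, 0 < tet a b
  | 0 => Nat.one_pos
  | _ + 1 => Nat.pow_pos ha

theorem two_mul_tet_le_tet_succ {a : ℕ} (ha : 2 ≤ a) (b : ℕ) : 2 * tet a b ≤ tet a (b + 1) :=
  (Nat.two_mul_le_two_pow _).trans (Nat.pow_le_pow_left ha _)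

theorem tet_lt_tet_succ {a : ℕ} (ha : 2 ≤ a) (b : ℕ) : tet a b < tet a (b + 1) := by
  have := two_mul_tet_le_tet_succ ha b
  have := tet_pos (by omega : 0 < a) b
  omega

theorem sharedDigits_tet_add_two {a : ℕ} (ha : 10 ∣ a) (ha0 : 0 < a) (b : ℕ) :
    sharedDigits (tet a (b + 2)) (tet a (b + 1)) =
      tet a b * min (a.factorization 2) (a.factorization 5) :=
  sharedDigits_pow_pow ha ha0
    (tet_lt_tet_succ ((by norm_num : 2 ≤ 10).trans (Nat.le_of_dvd ha0 ha)) b)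

theorem congSpeed_add_two {a : ℕ} (ha : 10 ∣ a) (ha0 : 0 < a) (b : ℕ) :
    congSpeed a (b + 2) =
      ((tet a (b + 1) : ℤ) - tet a b) * min (a.factorization 2) (a.factorization 5) := by
  rw [congSpeed, show b + 2 - 1 = b + 1 from rfl, sharedDigits_tet_add_two ha ha0,
    sharedDigits_tet_add_two ha ha0]
  push_cast
  ring

theorem congSpeed_add_two_lt {a : ℕ} (ha : 10 ∣ a) (ha0 : 0 < a) (b : ℕ) :
    congSpeed a (b + 2) < congSpeed a (b + 3) := by
  have ha2 : 2 ≤ a := (by norm_num : 2 ≤ 10).trans (Nat.le_of_dvd ha0 ha)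
  have ht : 1 ≤ min (a.factorization 2) (a.factorization 5) :=
    (Nat.ten_pow_dvd_iff ha0.ne').1 (by simpa using ha)
  have hconvex : 2 * tet a (b + 1) < tet a b + tet a (b + 2) := by
    have : 2 * tet a (b + 1) ≤ tet a (b + 2) := two_mul_tet_le_tet_succ ha2 (b + 1)
    have := tet_pos (by omega : 0 < a) b
    omega
  rw [congSpeed_add_two ha ha0, congSpeed_add_two ha ha0 (b + 1)]
  apply mul_lt_mul_of_pos_right _ (by exact_mod_cast ht)
  have : (2 * tet a (b + 1) : ℤ) < tet a b + tet a (b + 2) := by exact_mod_cast hconvex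
  linarith

theorem stmt_14_general (j c : ℕ) (hj : 0 < j) (hc : 0 < c) :
    ¬ ∃ (V : ℤ) (B : ℕ), ∀ b : ℕ, B ≤ b → 1 ≤ b → congSpeed (j * 10 ^ c) b = V := by
  rintro ⟨V, B, hV⟩
  have ha : 10 ∣ j * 10 ^ c := Dvd.dvd.mul_left (dvd_pow_self 10 hc.ne') j
  have ha0 : 0 < j * 10 ^ c := by positivity
  have hlt := congSpeed_add_two_lt ha ha0 B
  rw [hV (B + 2) (by omega) (by omega), hV (B + 3) (by omega) (by omega)] at hlt
  exact lt_irrefl V hlt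

theorem stmt_14 (j c : ℕ) (hj : 0 < j) (hj10 : ¬ (10 ∣ j)) (hc : 0 < c) :
    ¬ ∃ (V : ℤ) (B : ℕ), ∀ b : ℕ, B ≤ b → 1 ≤ b → congSpeed (j * 10 ^ c) b = V :=
  stmt_14_general j c hj hc
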